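/- Let n ≥ 4, let c ∈ ℂ^× with c ≠ 1, and let x = (x_2,…,x_{2n−1}) be nonzero complex numbers such that all denominators occurring below are nonzero. Let x′ = e_0^c(x). Then for every 3 ≤ k ≤ n−1 one has x′_k/x′_{n+k−1} = (c·S(x)²/(c−1)) · ( 1/(c·S_{k−1}(x) + T_{k−1}(x)) − 1/(c·S_k(x) + T_k(x)) ). -/

import Mathlib

/-!
Passing from `k - 1` to `k` moves the term `x_k / x_{n+k-1}` from `T` to `S`, so consecutive
denominators `c·S_k + T_k` differ by `(c - 1)·x_k / x_{n+k-1}`. The ratio `x′_k / x′_{n+k-1}`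
is `c·S²·(x_k / x_{n+k-1})` over the product of two consecutive denominators, and the formula
is the partial-fraction identity `1/A - 1/B = (B - A)/(AB)`.
-/

noncomputable section

/-- `Sf n x k = ∑_{j=2}^{k} x_j / x_{n+j-1}` (so `Sf n x 1 = 0`, `S(x) = Sf n x n`). -/
def Sf (n : ℕ) (x : ℕ → ℂ) (k : ℕ) : ℂ :=
  ∑ j ∈ Finset.Icc 2 k, x j / x (n + j - 1)

/-- `Tf n x k = ∑_{j=k+1}^{n} x_j / x_{n+j-1}` (so `Tf n x n = 0`). -/
def Tf (n : ℕ) (x : ℕ → ℂ) (k : ℕ) : ℂ :=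
  ∑ j ∈ Finset.Icc (k + 1) n, x j / x (n + j - 1)

/-- The rational map `e_0^c`. -/
def e0M (n : ℕ) (c : ℂ) (x : ℕ → ℂ) (k : ℕ) : ℂ :=
  if k ≤ n - 1 then x k * Sf n x n / (c * Sf n x k + Tf n x k)
  else if k ≤ n + 1 then x k / c
  else x k * (c * Sf n x (k - n) + Tf n x (k - n)) / (c * Sf n x n)

theorem div_div_eq_of_sub_eq_mul {K : Type*} [Field K] {a b c s u v : K}
    (ha : a ≠ 0) (hb : b ≠ 0) (hc : c ≠ 1) (h : b - a = (c - 1) * (u / v)) :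
    u * s / b / (v * a / (c * s)) = c * s ^ 2 / (c - 1) * (a⁻¹ - b⁻¹) := by
  rw [inv_sub_inv ha hb, h]
  field_simp [sub_ne_zero.mpr hc]

section

variable (n : ℕ) (x : ℕ → ℂ)

theorem Sf_succ {k : ℕ} (hk : 1 ≤ k) : Sf n x (k + 1) = Sf n x k + x (k + 1) / x (n + k) := by
  rw [Sf, Finset.sum_Icc_succ_top (by omega), Sf, show n + (k + 1) - 1 = n + k by omega]

theorem Tf_eq_add_Tf_succ {k : ℕ} (hk : k < n) :
    Tf n x k = x (k + 1) / x (n + k) + Tf n x (k + 1) := by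
  rw [Tf, ← Finset.insert_Icc_add_one_left_eq_Icc (by omega), Finset.sum_insert (by simp),
    show n + (k + 1) - 1 = n + k by omega, Tf]

theorem mul_Sf_add_Tf_succ_sub (c : ℂ) {k : ℕ} (hk : 1 ≤ k) (hkn : k < n) :
    c * Sf n x (k + 1) + Tf n x (k + 1) - (c * Sf n x k + Tf n x k)
      = (c - 1) * (x (k + 1) / x (n + k)) := by
  rw [Sf_succ n x hk, Tf_eq_add_Tf_succ n x hkn]
  ring

theorem e0M_of_le (c : ℂ) {k : ℕ} (hk : k ≤ n - 1) :
    e0M n c x k = x k * Sf n x n / (c * Sf n x k + Tf n x k) := by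
  rw [e0M, if_pos hk]

theorem e0M_add (c : ℂ) {l : ℕ} (hl : 2 ≤ l) :
    e0M n c x (n + l) = x (n + l) * (c * Sf n x l + Tf n x l) / (c * Sf n x n) := by
  rw [e0M, if_neg (by omega), if_neg (by omega), Nat.add_sub_cancel_left]

end

theorem stmt12_general (n : ℕ) (c : ℂ) (hc1 : c ≠ 1) (x : ℕ → ℂ)
    (hden : ∀ k, 2 ≤ k → k ≤ n - 1 → c * Sf n x k + Tf n x k ≠ 0) :
    ∀ k, 3 ≤ k → k ≤ n - 1 →
      e0M n c x k / e0M n c x (n + k - 1)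
        = (c * (Sf n x n) ^ 2 / (c - 1)) *
            ((c * Sf n x (k - 1) + Tf n x (k - 1))⁻¹ - (c * Sf n x k + Tf n x k)⁻¹) := by
  rintro k hk3 hkn
  obtain ⟨m, rfl⟩ : ∃ m, k = m + 1 := ⟨k - 1, by omega⟩
  rw [e0M_of_le n x c hkn, show n + (m + 1) - 1 = n + m by omega, e0M_add n x c (by omega),
    Nat.add_sub_cancel]
  exact div_div_eq_of_sub_eq_mul (hden m (by omega) (by omega)) (hden (m + 1) (by omega) hkn) hc1
    (mul_Sf_add_Tf_succ_sub n x c (by omega) (by omega))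

/-- the `k`-formula for `x′ = e_0^c(x)`, `3 ≤ k ≤ n-1`, `c ≠ 1`:
`x′_k/x′_{n+k-1} = (c·S(x)²/(c-1))·(1/(c·S_{k-1}+T_{k-1}) - 1/(c·S_k+T_k))`. -/
theorem stmt12 (n : ℕ) (hn : 4 ≤ n) (c : ℂ) (hc : c ≠ 0) (hc1 : c ≠ 1) (x : ℕ → ℂ)
    (hx : ∀ k, 2 ≤ k → k ≤ 2 * n - 1 → x k ≠ 0)
    (hS : Sf n x n ≠ 0)
    (hden : ∀ k, 2 ≤ k → k ≤ n - 1 → c * Sf n x k + Tf n x k ≠ 0) :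
    ∀ k, 3 ≤ k → k ≤ n - 1 →
      e0M n c x k / e0M n c x (n + k - 1)
        = (c * (Sf n x n) ^ 2 / (c - 1)) *
            ((c * Sf n x (k - 1) + Tf n x (k - 1))⁻¹ - (c * Sf n x k + Tf n x k)⁻¹) :=
  stmt12_general n c hc1 x hden
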